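/- Let P = {1,…,N} and A_i ∈ ℝ^{d×d} for i ∈ P. Suppose for each i ∈ P there are a symmetric positive definite P_i and λ_i ∈ ℝ with ⟨P_i e^{A_i t} ξ, e^{A_i t} ξ⟩ ≤ e^{−λ_i t} ⟨P_i ξ, ξ⟩ for all ξ ∈ ℝ^d and t ≥ 0, and constants μ_{kℓ} > 0 with ⟨P_ℓ z, z⟩ ≤ μ_{kℓ} ⟨P_k z, z⟩ for all z ∈ ℝ^d and all pairs (k,ℓ) used below. Let 0 = τ_0 < τ_1 < ⋯ and s_n ∈ P define a switching signal, and let x be the solution of the switched system ẋ = A_{σ(t)} x. Then for every M ∈ ℕ and every t ∈ [τ_M, τ_{M+1}): ⟨P_{s_M} x(t), x(t)⟩ ≤ ⟨P_{s_0} x(0), x(0)⟩ · (∏_{n=0}^{M−1} μ_{s_n s_{n+1}}) · exp( −λ_{s_M}(t − τ_M) − Σ_{n=0}^{M−1} λ_{s_n}(τ_{n+1} − τ_n) ). -/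

import Mathlib

/-!
On each interval `[τₙ, τₙ₊₁]` the solution is the matrix-exponential flow of `A_{sₙ}` started
at `x(τₙ)` (uniqueness for the Lipschitz linear ODE), so the decay hypothesis makes
`V_{sₙ} = quadForm (P sₙ)` drop by the factor `exp(-λ_{sₙ}(t - τₙ))` there, while at the switching instant `τₙ₊₁` passing from
`V_{sₙ}` to `V_{sₙ₊₁}` costs at most the factor `μ_{sₙ sₙ₊₁}`. The values `V_{sₙ}(x(τₙ))` thus
satisfy a one-step recursive inequality, which telescopes into the product and exponential sum.
-/

open scoped RealInnerProductSpace BigOperators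

noncomputable def quadForm {d : ℕ} (P : Matrix (Fin d) (Fin d) ℝ)
    (ξ : EuclideanSpace ℝ (Fin d)) : ℝ :=
  ⟪Matrix.toEuclideanLin P ξ, ξ⟫

def IsSwitchedSolution {d N : ℕ} (A : Fin N → Matrix (Fin d) (Fin d) ℝ)
    (τ : ℕ → ℝ) (s : ℕ → Fin N) (x : ℝ → EuclideanSpace ℝ (Fin d)) : Prop :=
  ContinuousOn x (Set.Ici 0) ∧
  ∀ n : ℕ, ∀ t ∈ Set.Ico (τ n) (τ (n + 1)),
    HasDerivWithinAt x (Matrix.toEuclideanLin (A (s n)) (x t)) (Set.Ico (τ n) (τ (n + 1))) t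

theorem le_mul_prod_range_of_le_mul {R : Type*} [CommSemiring R] [PartialOrder R]
    [IsOrderedRing R] {V c : ℕ → R} (hc : ∀ n, 0 ≤ c n) (h : ∀ n, V (n + 1) ≤ c n * V n)
    (M : ℕ) : V M ≤ V 0 * ∏ n ∈ Finset.range M, c n := by
  induction M with
  | zero => simp
  | succ M ih =>
    calc V (M + 1) ≤ c M * V M := h M
      _ ≤ c M * (V 0 * ∏ n ∈ Finset.range M, c n) := mul_le_mul_of_nonneg_left ih (hc M)
      _ = V 0 * ∏ n ∈ Finset.range (M + 1), c n := by rw [Finset.prod_range_succ]; ring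

namespace Matrix

variable {ι : Type*} [Fintype ι] [DecidableEq ι]

section LinftyOpNorm

-- Any normed algebra structure on matrices induces the product topology in which
-- `NormedSpace.exp` is taken; the `L∞` operator norm is just a convenient choice.
attribute [local instance] Matrix.linftyOpNormedRing Matrix.linftyOpNormedAlgebra

theorem hasDerivAt_toEuclideanLin_exp_smul (B : Matrix ι ι ℝ) (ξ : EuclideanSpace ℝ ι) (t : ℝ) :
    HasDerivAt (fun u : ℝ => toEuclideanLin (NormedSpace.exp (u • B)) ξ)
      (toEuclideanLin B (toEuclideanLin (NormedSpace.exp (t • B)) ξ)) t := by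
  let evalAt : Matrix ι ι ℝ →L[ℝ] EuclideanSpace ℝ ι :=
    LinearMap.toContinuousLinearMap ((LinearMap.applyₗ ξ).comp toEuclideanLin.toLinearMap)
  have h : HasDerivAt (fun u : ℝ => evalAt (NormedSpace.exp (u • B)))
      (evalAt (B * NormedSpace.exp (t • B))) t :=
    evalAt.hasFDerivAt.comp_hasDerivAt t (hasDerivAt_exp_smul_const' B t)
  have hevalAt : ∀ M, evalAt M = toEuclideanLin M ξ := fun _ => rfl
  simpa only [hevalAt, toLpLin_mul_same, LinearMap.comp_apply] using h

end LinftyOpNorm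

theorem eqOn_toEuclideanLin_exp_of_hasDerivWithinAt (B : Matrix ι ι ℝ) {a b : ℝ}
    {x : ℝ → EuclideanSpace ℝ ι} (hc : ContinuousOn x (Set.Icc a b))
    (hd : ∀ t ∈ Set.Ico a b, HasDerivWithinAt x (toEuclideanLin B (x t)) (Set.Ico a b) t) :
    Set.EqOn x (fun t => toEuclideanLin (NormedSpace.exp ((t - a) • B)) (x a)) (Set.Icc a b) := by
  have hflow : ∀ t, HasDerivAt (fun u => toEuclideanLin (NormedSpace.exp ((u - a) • B)) (x a))
      (toEuclideanLin B (toEuclideanLin (NormedSpace.exp ((t - a) • B)) (x a))) t :=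
    fun t => (hasDerivAt_toEuclideanLin_exp_smul B (x a) (t - a)).comp_sub_const t a
  let L : EuclideanSpace ℝ ι →L[ℝ] EuclideanSpace ℝ ι :=
    LinearMap.toContinuousLinearMap (toEuclideanLin B)
  exact ODE_solution_unique_of_mem_Icc_right (v := fun _ => L) (s := fun _ => Set.univ)
    (fun _ _ => L.lipschitz.lipschitzOnWith) hc
    (fun t ht => (hd t ht).mono_of_mem_nhdsWithin (Ico_mem_nhdsGE_of_mem ht)) (fun _ _ => trivial)
    (fun t _ => (hflow t).continuousAt.continuousWithinAt) (fun t _ => (hflow t).hasDerivWithinAt)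
    (fun _ _ => trivial) (by simp)

end Matrix

theorem IsSwitchedSolution.eqOn_exp {d N : ℕ} {A : Fin N → Matrix (Fin d) (Fin d) ℝ}
    {τ : ℕ → ℝ} {s : ℕ → Fin N} {x : ℝ → EuclideanSpace ℝ (Fin d)}
    (hx : IsSwitchedSolution A τ s x) {n : ℕ} (hτn : 0 ≤ τ n) :
    Set.EqOn x (fun t => Matrix.toEuclideanLin (NormedSpace.exp ((t - τ n) • A (s n))) (x (τ n)))
      (Set.Icc (τ n) (τ (n + 1))) :=
  Matrix.eqOn_toEuclideanLin_exp_of_hasDerivWithinAt (A (s n))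
    (hx.1.mono fun _ ht => hτn.trans ht.1) (hx.2 n)

theorem stmt9_general {d N : ℕ}
    (A : Fin N → Matrix (Fin d) (Fin d) ℝ)
    (P : Fin N → Matrix (Fin d) (Fin d) ℝ) (lam : Fin N → ℝ)
    (hdecay : ∀ (i : Fin N) (ξ : EuclideanSpace ℝ (Fin d)) (t : ℝ), 0 ≤ t →
      quadForm (P i) (Matrix.toEuclideanLin (NormedSpace.exp (t • A i)) ξ) ≤
        Real.exp (-(lam i) * t) * quadForm (P i) ξ)
    (τ : ℕ → ℝ) (s : ℕ → Fin N)
    (hτ0 : τ 0 = 0) (hτmono : StrictMono τ)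
    (μ : Fin N → Fin N → ℝ)
    (hμpos : ∀ n : ℕ, 0 < μ (s n) (s (n + 1)))
    (hμ : ∀ n : ℕ, ∀ z : EuclideanSpace ℝ (Fin d),
      quadForm (P (s (n + 1))) z ≤ μ (s n) (s (n + 1)) * quadForm (P (s n)) z)
    (x : ℝ → EuclideanSpace ℝ (Fin d)) (hx : IsSwitchedSolution A τ s x) :
    ∀ M : ℕ, ∀ t ∈ Set.Ico (τ M) (τ (M + 1)),
      quadForm (P (s M)) (x t) ≤
        quadForm (P (s 0)) (x 0) *
          (∏ n ∈ Finset.range M, μ (s n) (s (n + 1))) *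
          Real.exp (-(lam (s M)) * (t - τ M) -
            ∑ n ∈ Finset.range M, lam (s n) * (τ (n + 1) - τ n)) := by
  have hτnn : ∀ n, 0 ≤ τ n := fun n => hτ0 ▸ hτmono.monotone n.zero_le
  have hdecay_on : ∀ n, ∀ t ∈ Set.Icc (τ n) (τ (n + 1)), quadForm (P (s n)) (x t) ≤
      Real.exp (-lam (s n) * (t - τ n)) * quadForm (P (s n)) (x (τ n)) := by
    intro n t ht
    rw [hx.eqOn_exp (hτnn n) ht]
    exact hdecay _ _ _ (sub_nonneg.2 ht.1)
  have hstep : ∀ n, quadForm (P (s (n + 1))) (x (τ (n + 1))) ≤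
      (μ (s n) (s (n + 1)) * Real.exp (-lam (s n) * (τ (n + 1) - τ n))) *
        quadForm (P (s n)) (x (τ n)) := fun n =>
    calc _ ≤ μ (s n) (s (n + 1)) * quadForm (P (s n)) (x (τ (n + 1))) := hμ n _
      _ ≤ _ := by
        rw [mul_assoc]
        exact mul_le_mul_of_nonneg_left
          (hdecay_on n _ ⟨(hτmono n.lt_succ_self).le, le_rfl⟩) (hμpos n).le
  intro M t ht
  have hchain := le_mul_prod_range_of_le_mul (V := fun n => quadForm (P (s n)) (x (τ n)))
    (fun n => (mul_pos (hμpos n) (Real.exp_pos _)).le) hstep M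
  rw [Finset.prod_mul_distrib, ← Real.exp_sum, hτ0] at hchain
  calc quadForm (P (s M)) (x t)
      ≤ Real.exp (-lam (s M) * (t - τ M)) * quadForm (P (s M)) (x (τ M)) :=
        hdecay_on M t (Set.Ico_subset_Icc_self ht)
    _ ≤ Real.exp (-lam (s M) * (t - τ M)) * (quadForm (P (s 0)) (x 0) *
          ((∏ n ∈ Finset.range M, μ (s n) (s (n + 1))) *
            Real.exp (∑ n ∈ Finset.range M, -lam (s n) * (τ (n + 1) - τ n)))) :=
        mul_le_mul_of_nonneg_left hchain (Real.exp_pos _).le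
    _ = _ := by
        simp only [neg_mul, Finset.sum_neg_distrib, sub_eq_add_neg, Real.exp_add]
        ring

/-- The iterated multiple-Lyapunov-function bound: for every `M` and `t ∈ [τ_M, τ_{M+1})`,
`V_{s_M}(x(t)) ≤ V_{s_0}(x(0)) ⬝ (∏_{n<M} μ_{s_n s_{n+1}}) ⬝
exp(-λ_{s_M}(t - τ_M) - Σ_{n<M} λ_{s_n}(τ_{n+1} - τ_n))`. -/
theorem stmt9 {d N : ℕ}
    (A : Fin N → Matrix (Fin d) (Fin d) ℝ)
    (P : Fin N → Matrix (Fin d) (Fin d) ℝ) (lam : Fin N → ℝ)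
    (hP : ∀ i, (P i).PosDef)
    (hdecay : ∀ (i : Fin N) (ξ : EuclideanSpace ℝ (Fin d)) (t : ℝ), 0 ≤ t →
      quadForm (P i) (Matrix.toEuclideanLin (NormedSpace.exp (t • A i)) ξ) ≤
        Real.exp (-(lam i) * t) * quadForm (P i) ξ)
    (τ : ℕ → ℝ) (s : ℕ → Fin N)
    (hτ0 : τ 0 = 0) (hτmono : StrictMono τ)
    (hτtop : Filter.Tendsto τ Filter.atTop Filter.atTop)
    (hs : ∀ n, s (n + 1) ≠ s n)
    (μ : Fin N → Fin N → ℝ)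
    (hμpos : ∀ n : ℕ, 0 < μ (s n) (s (n + 1)))
    (hμ : ∀ n : ℕ, ∀ z : EuclideanSpace ℝ (Fin d),
      quadForm (P (s (n + 1))) z ≤ μ (s n) (s (n + 1)) * quadForm (P (s n)) z)
    (x : ℝ → EuclideanSpace ℝ (Fin d)) (hx : IsSwitchedSolution A τ s x) :
    ∀ M : ℕ, ∀ t ∈ Set.Ico (τ M) (τ (M + 1)),
      quadForm (P (s M)) (x t) ≤
        quadForm (P (s 0)) (x 0) *
          (∏ n ∈ Finset.range M, μ (s n) (s (n + 1))) *
          Real.exp (-(lam (s M)) * (t - τ M) -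
            ∑ n ∈ Finset.range M, lam (s n) * (τ (n + 1) - τ n)) :=
  stmt9_general A P lam hdecay τ s hτ0 hτmono μ hμpos hμ x hx
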